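/- Let 1 → K → G → Q → 1 be a short exact sequence with G = ⟨A | C⟩ finitely presented and K generated by a finite set X. Let (α_G, ρ_G) be an area-radius pair for the presentation ⟨A | C⟩, with α_G and ρ_G nondecreasing. Let R ⊆ F(X) be a finite set of elements each representing 1 in K, let push be a push-down map for this data (with lift ι̃ : F(X) → F(A) and induced ψ̃ : F(A) → Q), and suppose: (a) Area_R(push_{1_Q}(ι̃(x))·x⁻¹) < ∞ for all x ∈ X; and (b) there is a nondecreasing function f : ℕ → ℕ such that Area_R(push_q(C)) ≤ f(N) for every C ∈ C and every q ∈ Q whose word length with respect to the generating set ψ̃(A) of Q is at most N. Then K is presented by ⟨X | R⟩ (the kernel of F(X) → K equals the normal closure of R), and the Dehn function satisfies δ_{K,X,R}(N) ≼ α_G(N)·f(ρ_G(N)): there is a constant C' > 0 such that δ_{K,X,R}(N) ≤ C'·α_G(C'N + C')·f(ρ_G(C'N + C')) + C'N + C' for all N. -/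

import Mathlib

open scoped BigOperators Pointwise commutatorElement

namespace DehnPaper

noncomputable section

/-- Word length (length of the reduced word) of an element of a free group. -/
def wordLength {S : Type*} (w : FreeGroup S) : ℕ :=
  letI := Classical.decEq S
  w.toWord.length

/-- `AreaLe R w M` : `w` is a product of at most `M` conjugates of elements of `R ∪ R⁻¹`. -/
def AreaLe {F : Type*} [Group F] (R : Set F) (w : F) (M : ℕ) : Prop :=
  ∃ k : ℕ, k ≤ M ∧ ∃ u ρ : Fin k → F,
    (∀ i, ρ i ∈ R ∪ R⁻¹) ∧ w = (List.ofFn fun i => (u i)⁻¹ * ρ i * u i).prod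

/-- The area of `w` with respect to `R`, as an extended natural number
(`⊤` if `w` is not a product of conjugates of elements of `R ∪ R⁻¹`). -/
def area {F : Type*} [Group F] (R : Set F) (w : F) : ℕ∞ :=
  sInf ((fun k : ℕ => (k : ℕ∞)) '' {k | AreaLe R w k})

/-- The Dehn function of the presentation data `(π, rels)`. -/
def dehn {S K : Type*} [Group K] (π : FreeGroup S →* K)
    (rels : Set (FreeGroup S)) (N : ℕ) : ℕ∞ :=
  ⨆ w ∈ {w : FreeGroup S | wordLength w ≤ N ∧ π w = 1}, area rels w

/-- `(π, rels)` is a presentation: `π` is surjective and its kernel is the normal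
closure of `rels`. -/
def IsPresentation {S K : Type*} [Group K] (π : FreeGroup S →* K)
    (rels : Set (FreeGroup S)) : Prop :=
  Function.Surjective π ∧ π.ker = Subgroup.normalClosure rels

def FinitelyPresented (K : Type*) [Group K] : Prop :=
  ∃ (S : Type) (_ : Fintype S) (π : FreeGroup S →* K) (rels : Finset (FreeGroup S)),
    IsPresentation π (rels : Set (FreeGroup S))

/-- `f ≼ g` for (extended-natural-valued) Dehn functions. -/
def DehnLe (f g : ℕ → ℕ∞) : Prop :=
  ∃ C : ℕ, 0 < C ∧ ∀ N : ℕ,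
    f N ≤ (C : ℕ∞) * g (C * N + C) + (C : ℕ∞) * (N : ℕ∞) + (C : ℕ∞)

def DehnEquiv (f g : ℕ → ℕ∞) : Prop := DehnLe f g ∧ DehnLe g f

/-- `K` has polynomially bounded Dehn function (for every finite presentation). -/
def PolyBoundedDehn (K : Type*) [Group K] : Prop :=
  ∀ (S : Type) (_ : Fintype S) (π : FreeGroup S →* K) (rels : Finset (FreeGroup S)),
    IsPresentation π (rels : Set (FreeGroup S)) →
    ∃ d C' : ℕ, 0 < C' ∧ ∀ N : ℕ,
      dehn π (rels : Set (FreeGroup S)) N ≤ ((C' * N ^ d + C' : ℕ) : ℕ∞)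

def ResiduallyFree (K : Type*) [Group K] : Prop :=
  ∀ g : K, g ≠ 1 → ∃ φ : K →* FreeGroup (Fin 2), φ g ≠ 1

/-- `K` embeds into a direct product of finitely many finitely generated free groups. -/
def IsSPF (K : Type*) [Group K] : Prop :=
  ∃ (n : ℕ) (m : Fin n → ℕ) (f : K →* ((i : Fin n) → FreeGroup (Fin (m i)))),
    Function.Injective f

/-! ### Products of free groups and the kernels `K_{m₁,…,mₙ}(r)` -/

/-- `ℤ^r`, written multiplicatively. -/
abbrev Zr (r : ℕ) := Multiplicative (Fin r → ℤ)

/-- The `j`-th standard basis vector of `ℤ^r`. -/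
def basisVec (r : ℕ) (j : Fin r) : Zr r := Multiplicative.ofAdd (Pi.single j 1)

/-- The map `F_{mα} → ℤ^r` sending `a_j` to `e_j` for `j ≤ r` and to `0` otherwise. -/
def psiFactor (r mα : ℕ) : FreeGroup (Fin mα) →* Zr r :=
  FreeGroup.lift fun j => if h : j.val < r then basisVec r ⟨j.val, h⟩ else 1

/-- The map `ψ : F_{m₁} × ⋯ × F_{mₙ} → ℤ^r`. -/
def psi (n r : ℕ) (m : Fin n → ℕ) :
    ((α : Fin n) → FreeGroup (Fin (m α))) →* Zr r where
  toFun g := ∏ α, psiFactor r (m α) (g α)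
  map_one' := by simp
  map_mul' g h := by
    simp only [Pi.mul_apply, map_mul]
    exact Finset.prod_mul_distrib

/-- The kernel `K_{m₁,…,mₙ}(r)`. -/
def Kker (n r : ℕ) (m : Fin n → ℕ) :
    Subgroup ((α : Fin n) → FreeGroup (Fin (m α))) :=
  (psi n r m).ker

/-- The map `ψ : F^(1) × ⋯ × F^(n) → ℤ^r` in the equal-rank case, sending each
`a_j^(α)` to `e_j`. -/
def psiEq (n r : ℕ) : ((_ : Fin n) → FreeGroup (Fin r)) →* Zr r where
  toFun g := ∏ α, FreeGroup.lift (basisVec r) (g α)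
  map_one' := by simp
  map_mul' g h := by
    simp only [Pi.mul_apply, map_mul]
    exact Finset.prod_mul_distrib

def lastIdx (n : ℕ) (hn : 0 < n) : Fin n := ⟨n - 1, by omega⟩

/-- The generator `a_i^(α)` of the direct product of `n` free groups of rank `r`. -/
def aElem (n r : ℕ) (α : Fin n) (i : Fin r) : (_ : Fin n) → FreeGroup (Fin r) :=
  Pi.mulSingle α (FreeGroup.of i)

/-- The generator `x_i^(α) = a_i^(α) (a_i^(n))⁻¹` of `K_r^n(r)`. -/
def xElem (n r : ℕ) (hn : 0 < n) (p : Fin (n - 1) × Fin r) :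
    (_ : Fin n) → FreeGroup (Fin r) :=
  aElem n r (Fin.castLE (by omega) p.1) p.2 * (aElem n r (lastIdx n hn) p.2)⁻¹

/-! ### The relation sets `R_r^n` -/

/-- The formal generator `x_i^(α)` in the free group on `X_r`. -/
def xg {B : Type*} {r : ℕ} (α : B) (i : Fin r) : FreeGroup (B × Fin r) :=
  FreeGroup.of (α, i)

def IsSign (ε : ℤ) : Prop := ε = 1 ∨ ε = -1

def R1 (n r : ℕ) : Set (FreeGroup (Fin (n - 1) × Fin r)) :=
  {w | ∃ (α β : Fin (n - 1)) (i : Fin r), α ≠ β ∧ w = ⁅xg α i, xg β i⁆}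

def R2 (n r : ℕ) : Set (FreeGroup (Fin (n - 1) × Fin r)) :=
  {w | ∃ (α β γ : Fin (n - 1)) (i j : Fin r), i ≠ j ∧ α ≠ β ∧ α ≠ γ ∧ β ≠ γ ∧
    w = ⁅xg α i, xg β j * (xg γ j)⁻¹⁆}

def R3 (n r : ℕ) : Set (FreeGroup (Fin (n - 1) × Fin r)) :=
  {w | ∃ (α β : Fin (n - 1)) (i j : Fin r) (ε δ : ℤ), i ≠ j ∧ α ≠ β ∧
    IsSign ε ∧ IsSign δ ∧
    w = ⁅xg α i ^ ε, xg β j ^ δ⁆ * ⁅xg α j ^ δ, xg β i ^ ε⁆}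

def R4 (n r : ℕ) : Set (FreeGroup (Fin (n - 1) × Fin r)) :=
  {w | ∃ (α β : Fin (n - 1)) (i j k : Fin r) (ε δ : ℤ),
    i ≠ j ∧ i ≠ k ∧ j ≠ k ∧ α ≠ β ∧ IsSign ε ∧ IsSign δ ∧
    w = ⁅xg α i, ⁅xg β j ^ ε, xg α k ^ δ * xg β k ^ (-δ)⁆⁆}

def R5 (n r : ℕ) : Set (FreeGroup (Fin (n - 1) × Fin r)) :=
  {w | ∃ (α β : Fin (n - 1)) (i j k h : Fin r) (ε δ σ τ : ℤ),
    i ≠ j ∧ i ≠ k ∧ i ≠ h ∧ j ≠ k ∧ j ≠ h ∧ k ≠ h ∧ α ≠ β ∧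
    IsSign ε ∧ IsSign δ ∧ IsSign σ ∧ IsSign τ ∧
    w = ⁅⁅xg α i ^ ε, xg α k ^ δ * xg β k ^ (-δ)⁆,
          ⁅xg β j ^ σ, xg α h ^ τ * xg β h ^ (-τ)⁆⁆}

/-- The relation set `R_r^n`. -/
def Rset (n r : ℕ) : Set (FreeGroup (Fin (n - 1) × Fin r)) :=
  if n = 3 then R1 n r ∪ R3 n r ∪ R4 n r ∪ R5 n r
  else if n = 4 then R1 n r ∪ R2 n r ∪ R4 n r
  else R1 n r ∪ R2 n r

/-- The exponent `d_n`. -/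
def dExp (n : ℕ) : ℕ := if n = 3 then 7 else if n = 4 then 3 else 2

/-- The norm `‖φ‖` of a homomorphism of (finitely generated) free groups. -/
def homNorm {r r' : ℕ} (φ : FreeGroup (Fin r) →* FreeGroup (Fin r')) : ℕ :=
  Finset.univ.sup fun i : Fin r => wordLength (φ (FreeGroup.of i))

/-- The symmetrized homomorphism `φ̂`. -/
def symmHom {B : Type*} {r r' : ℕ} (φ : FreeGroup (Fin r) →* FreeGroup (Fin r')) :
    FreeGroup (B × Fin r) →* FreeGroup (B × Fin r') :=
  FreeGroup.lift fun p => FreeGroup.map (fun j => (p.1, j)) (φ (FreeGroup.of p.2))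

/-- The doubling homomorphism `ρ_r : F_r → F_{r+1}`, `v₁ ↦ v₁v₂`, `vᵢ ↦ vᵢ₊₁`. -/
def rho (r : ℕ) (hr : 1 ≤ r) : FreeGroup (Fin r) →* FreeGroup (Fin (r + 1)) :=
  FreeGroup.lift fun i =>
    if i.val = 0 then
      FreeGroup.of (⟨0, by omega⟩ : Fin (r + 1)) * FreeGroup.of (⟨1, by omega⟩ : Fin (r + 1))
    else FreeGroup.of i.succ

/-- The homomorphism `κ_{q,q'} : F_{r+2} → F_r`. -/
def kappa {r : ℕ} (q q' : Fin r → ℤ) : FreeGroup (Fin (r + 2)) →* FreeGroup (Fin r) :=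
  FreeGroup.lift fun i =>
    if h : i.val < r then FreeGroup.of (⟨i.val, h⟩ : Fin r)
    else if i.val = r then (List.ofFn fun j : Fin r => FreeGroup.of j ^ q j).prod
    else (List.ofFn fun j : Fin r => FreeGroup.of j ^ q' j).prod

/-- The set `R_r^n(m)` of thick relations. -/
def thick (n r m : ℕ) : Set (FreeGroup (Fin (n - 1) × Fin r)) :=
  {w | ∃ (φ : FreeGroup (Fin (r + 2)) →* FreeGroup (Fin (r + 2))) (q q' : Fin r → ℤ),
    homNorm φ ≤ 1 ∧ (∀ j, (q j).natAbs ≤ m + 1) ∧ (∀ j, (q' j).natAbs ≤ m + 1) ∧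
    ∃ v ∈ Rset n (r + 2), w = symmHom (kappa q q') (symmHom φ v)}

/-- The homomorphism `ψ̃ : F(A_r) → ℤ^r`, sending each `a_i^(α)` to `e_i`. -/
def psiA (n r : ℕ) : FreeGroup (Fin n × Fin r) →* Zr r :=
  FreeGroup.lift fun p => basisVec r p.2

/-- `(x₁^(β))^{-q₁} ⋯ (x_{t}^(β))^{-q_t}` (indices `< t`, in increasing order). -/
def prefProd {B : Type*} {r : ℕ} (β : B) (q : Fin r → ℤ) (t : ℕ) :
    FreeGroup (B × Fin r) :=
  (((List.finRange r).filter fun i => i.val < t).map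
    fun i => FreeGroup.of (β, i) ^ (-(q i))).prod

/-- `(x_{t+1}^(β))^{-q_{t+1}} ⋯ (x_r^(β))^{-q_r}` (indices `≥ t`, in increasing order). -/
def midProd {B : Type*} {r : ℕ} (β : B) (q : Fin r → ℤ) (t : ℕ) :
    FreeGroup (B × Fin r) :=
  (((List.finRange r).filter fun i => t ≤ i.val).map
    fun i => FreeGroup.of (β, i) ^ (-(q i))).prod

end

/-!
Since `push` is a cocycle and `ψ̃ ∘ ι̃ = 1`, the map `φ = push_1 ∘ ι̃` is an endomorphism of `F(X)`,
and `w = (φ w · w⁻¹)⁻¹ · φ w`. By (a), `φ w · w⁻¹` has area at most linear in `|w|`, one letter at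
a time. If `w` represents `1` in `K`, then `ι̃ w` is null-homotopic in `G`, hence a product of at
most `α_G(|ι̃ w|)` conjugates `u⁻¹ C u` with `|u| ≤ ρ_G(|ι̃ w|)`; `push_1` turns each of them into a
conjugate of `push_q(C)` with `q = ψ̃(u⁻¹)`, of area at most `f(ρ_G(|ι̃ w|))` by (b). As `|ι̃ w|` is
linear in `|w|`, this bounds the area of `w`; in particular `w` lies in the normal closure of `R`.
-/

section Area

variable {F : Type*} [Group F] {R : Set F} {w w' : F} {M M' : ℕ}

theorem areaLe_iff_exists_list : AreaLe R w M ↔ ∃ l : List F, l.length ≤ M ∧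
    (∀ g ∈ l, g ∈ Group.conjugatesOfSet (R ∪ R⁻¹)) ∧ l.prod = w := by
  constructor
  · rintro ⟨k, hk, u, ρ, hρ, rfl⟩
    refine ⟨List.ofFn fun i => (u i)⁻¹ * ρ i * u i, by simpa using hk, ?_, rfl⟩
    simp only [List.mem_ofFn]
    rintro _ ⟨i, rfl⟩
    exact Group.mem_conjugatesOfSet_iff.2 ⟨ρ i, hρ i, isConj_iff.2 ⟨(u i)⁻¹, by group⟩⟩
  · rintro ⟨l, hl, hmem, rfl⟩
    choose ρ hρ hconj using fun i : Fin l.length =>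
      Group.mem_conjugatesOfSet_iff.1 (hmem _ (l.get_mem i))
    choose c hc using fun i => isConj_iff.1 (hconj i)
    refine ⟨l.length, hl, fun i => (c i)⁻¹, ρ, hρ, ?_⟩
    conv_lhs => rw [← List.ofFn_get l]
    simp only [inv_inv, hc]

theorem AreaLe.mono (h : AreaLe R w M) (hM : M ≤ M') : AreaLe R w M' :=
  let ⟨k, hk, rest⟩ := h
  ⟨k, hk.trans hM, rest⟩

theorem areaLe_one : AreaLe R (1 : F) 0 :=
  areaLe_iff_exists_list.2 ⟨[], le_rfl, by simp, rfl⟩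

theorem AreaLe.mul (h : AreaLe R w M) (h' : AreaLe R w' M') : AreaLe R (w * w') (M + M') := by
  obtain ⟨l, hl, hmem, rfl⟩ := areaLe_iff_exists_list.1 h
  obtain ⟨l', hl', hmem', rfl⟩ := areaLe_iff_exists_list.1 h'
  refine areaLe_iff_exists_list.2 ⟨l ++ l', by simpa using add_le_add hl hl', ?_, List.prod_append⟩
  simp only [List.mem_append]
  rintro g (hg | hg)
  exacts [hmem g hg, hmem' g hg]

theorem AreaLe.inv (h : AreaLe R w M) : AreaLe R w⁻¹ M := by
  obtain ⟨l, hl, hmem, rfl⟩ := areaLe_iff_exists_list.1 h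
  refine areaLe_iff_exists_list.2
    ⟨(l.map (·⁻¹)).reverse, by simpa using hl, ?_, (List.prod_inv_reverse l).symm⟩
  simp only [List.mem_reverse, List.mem_map]
  rintro _ ⟨g, hg, rfl⟩
  obtain ⟨ρ, hρ, hconj⟩ := Group.mem_conjugatesOfSet_iff.1 (hmem g hg)
  obtain ⟨c, rfl⟩ := isConj_iff.1 hconj
  refine Group.mem_conjugatesOfSet_iff.2 ⟨ρ⁻¹, ?_, isConj_iff.2 ⟨c, by group⟩⟩
  rcases hρ with hρ | hρ
  exacts [Or.inr (Set.inv_mem_inv.2 hρ), Or.inl hρ]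

theorem AreaLe.conj (h : AreaLe R w M) (c : F) : AreaLe R (c * w * c⁻¹) M := by
  obtain ⟨l, hl, hmem, rfl⟩ := areaLe_iff_exists_list.1 h
  refine areaLe_iff_exists_list.2 ⟨l.map (MulAut.conj c), by simpa using hl, ?_, ?_⟩
  · simp only [List.mem_map]
    rintro _ ⟨g, hg, rfl⟩
    exact Group.conj_mem_conjugatesOfSet (hmem g hg)
  · rw [← map_list_prod, MulAut.conj_apply]

theorem areaLe_list_prod {l : List F} (h : ∀ g ∈ l, AreaLe R g M) :
    AreaLe R l.prod (l.length * M) := by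
  induction l with
  | nil => simpa using areaLe_one
  | cons a l ih =>
    rw [List.prod_cons, List.length_cons, add_mul, one_mul, add_comm]
    exact (h a List.mem_cons_self).mul (ih fun g hg => h g (List.mem_cons_of_mem _ hg))

theorem AreaLe.mem_normalClosure (h : AreaLe R w M) : w ∈ Subgroup.normalClosure R := by
  obtain ⟨l, -, hmem, rfl⟩ := areaLe_iff_exists_list.1 h
  refine Subgroup.list_prod_mem _ fun g hg => ?_
  have hR : R ∪ R⁻¹ ⊆ Subgroup.normalClosure R := Set.union_subset
    Subgroup.subset_normalClosure fun ρ hρ => inv_inv ρ ▸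
      (Subgroup.normalClosure R).inv_mem (Subgroup.subset_normalClosure hρ)
  exact Group.conjugatesOfSet_subset hR (hmem g hg)

theorem area_le_of_areaLe (h : AreaLe R w M) : area R w ≤ M :=
  sInf_le ⟨M, h, rfl⟩

theorem dehn_le_of_forall_areaLe {S K : Type*} [Group K] {π : FreeGroup S →* K}
    {R : Set (FreeGroup S)} {N B : ℕ}
    (h : ∀ w, wordLength w ≤ N → π w = 1 → AreaLe R w B) : dehn π R N ≤ B :=
  iSup₂_le fun w ⟨hN, hw⟩ => area_le_of_areaLe (h w hN hw)

end Area

section WordLength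

variable {S T : Type*}

theorem wordLength_eq_norm [DecidableEq S] (w : FreeGroup S) : wordLength w = w.norm := by
  unfold wordLength FreeGroup.norm
  congr
  exact Subsingleton.elim _ _

theorem wordLength_inv (w : FreeGroup S) : wordLength w⁻¹ = wordLength w := by
  classical
  simp only [wordLength_eq_norm, FreeGroup.norm_inv_eq]

theorem wordLength_mul_le (w w' : FreeGroup S) :
    wordLength (w * w') ≤ wordLength w + wordLength w' := by
  classical
  simpa only [wordLength_eq_norm] using FreeGroup.norm_mul_le w w'

theorem induction_on_wordLength {P : FreeGroup S → ℕ → Prop} (one : P 1 0)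
    (of_mul : ∀ x v n, P v n → P (FreeGroup.of x * v) (n + 1))
    (inv_of_mul : ∀ x v n, P v n → P ((FreeGroup.of x)⁻¹ * v) (n + 1)) (v : FreeGroup S) :
    P v (wordLength v) := by
  let _ := Classical.decEq S
  suffices h : ∀ L : List (S × Bool), P (FreeGroup.mk L) L.length by
    have hv := h v.toWord
    rwa [FreeGroup.mk_toWord] at hv
  intro L
  induction L with
  | nil => exact one
  | cons p L ih =>
    obtain ⟨x, _ | _⟩ := p
    · have hmk : FreeGroup.mk ((x, false) :: L) = (FreeGroup.of x)⁻¹ * FreeGroup.mk L := by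
        rw [FreeGroup.of, FreeGroup.inv_mk, FreeGroup.mul_mk]; rfl
      exact hmk ▸ inv_of_mul x _ _ ih
    · have hmk : FreeGroup.mk ((x, true) :: L) = FreeGroup.of x * FreeGroup.mk L := by
        rw [FreeGroup.of, FreeGroup.mul_mk]; rfl
      exact hmk ▸ of_mul x _ _ ih

theorem wordLength_map_le (φ : FreeGroup S →* FreeGroup T) {C : ℕ}
    (hC : ∀ x, wordLength (φ (FreeGroup.of x)) ≤ C) (v : FreeGroup S) :
    wordLength (φ v) ≤ C * wordLength v := by
  refine induction_on_wordLength (P := fun v n => wordLength (φ v) ≤ C * n) (by simp [wordLength])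
    (fun x v n ih => ?_) (fun x v n ih => ?_) v
  · calc wordLength (φ (FreeGroup.of x * v))
        ≤ wordLength (φ (FreeGroup.of x)) + wordLength (φ v) := by
          rw [map_mul]; exact wordLength_mul_le _ _
      _ ≤ C * (n + 1) := by rw [mul_add_one, add_comm (C * n)]; exact add_le_add (hC x) ih
  · calc wordLength (φ ((FreeGroup.of x)⁻¹ * v))
        ≤ wordLength (φ (FreeGroup.of x)) + wordLength (φ v) := by
          rw [map_mul, map_inv, ← wordLength_inv (φ (FreeGroup.of x))]
          exact wordLength_mul_le _ _
      _ ≤ C * (n + 1) := by rw [mul_add_one, add_comm (C * n)]; exact add_le_add (hC x) ih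

theorem exists_wordLength_map_le [Finite S] (φ : FreeGroup S →* FreeGroup T) :
    ∃ C, ∀ v, wordLength (φ v) ≤ C * wordLength v := by
  obtain ⟨C, hC⟩ := (Set.finite_range fun x => wordLength (φ (FreeGroup.of x))).bddAbove
  exact ⟨C, wordLength_map_le φ fun x => hC ⟨x, rfl⟩⟩

theorem areaLe_map_mul_inv_map {H : Type*} [Group H] {R : Set H} (φ ψ : FreeGroup S →* H)
    {M : ℕ} (h : ∀ x, AreaLe R (φ (FreeGroup.of x) * (ψ (FreeGroup.of x))⁻¹) M)
    (v : FreeGroup S) : AreaLe R (φ v * (ψ v)⁻¹) (M * wordLength v) := by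
  refine induction_on_wordLength (P := fun v n => AreaLe R (φ v * (ψ v)⁻¹) (M * n))
    (by simpa using areaLe_one) (fun x v n ih => ?_) (fun x v n ih => ?_) v
  · have e : φ (FreeGroup.of x * v) * (ψ (FreeGroup.of x * v))⁻¹ =
        φ (FreeGroup.of x) * (ψ (FreeGroup.of x))⁻¹ *
          (ψ (FreeGroup.of x) * (φ v * (ψ v)⁻¹) * (ψ (FreeGroup.of x))⁻¹) := by
      simp only [map_mul]; group
    rw [e, mul_add_one, add_comm]
    exact (h x).mul (ih.conj _)
  · have e : φ ((FreeGroup.of x)⁻¹ * v) * (ψ ((FreeGroup.of x)⁻¹ * v))⁻¹ =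
        (ψ (FreeGroup.of x))⁻¹ * (φ (FreeGroup.of x) * (ψ (FreeGroup.of x))⁻¹)⁻¹ *
            (ψ (FreeGroup.of x))⁻¹⁻¹ *
          ((ψ (FreeGroup.of x))⁻¹ * (φ v * (ψ v)⁻¹) * (ψ (FreeGroup.of x))⁻¹⁻¹) := by
      simp only [map_mul, map_inv]; group
    rw [e, mul_add_one, add_comm]
    exact ((h x).inv.conj _).mul (ih.conj _)

end WordLength

theorem add_comp_le_scaled {g : ℕ → ℕ} (hg : Monotone g) (M₀ C₀ : ℕ) {n N : ℕ} (hn : n ≤ N) :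
    M₀ * n + g (C₀ * n) ≤
      (M₀ + C₀ + 1) * g ((M₀ + C₀ + 1) * N + (M₀ + C₀ + 1)) + (M₀ + C₀ + 1) * N +
        (M₀ + C₀ + 1) := by
  set C' := M₀ + C₀ + 1
  have hC₀n : C₀ * n ≤ C' * N + C' := (Nat.mul_le_mul (by omega) hn).trans (Nat.le_add_right _ _)
  have hM₀n : M₀ * n ≤ C' * N := Nat.mul_le_mul (by omega) hn
  have hg_le : g (C' * N + C') ≤ C' * g (C' * N + C') := Nat.le_mul_of_pos_left _ (by omega)
  have := hg hC₀n
  omega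

section PushDown

variable {M Q H : Type*} [Group M] [Group Q] [Group H] {ψ : M →* Q} {push : Q → M → H}

/-- Condition (1) of a push-down map, for `ψ = ψ̃`. -/
def IsPushCocycle (ψ : M →* Q) (push : Q → M → H) : Prop :=
  ∀ q w w', push q (w * w') = push q w * push (q * ψ w) w'

namespace IsPushCocycle

theorem map_one (hp : IsPushCocycle ψ push) (q : Q) : push q 1 = 1 := by
  simpa using hp q 1 1

theorem map_inv (hp : IsPushCocycle ψ push) (q : Q) (w : M) :
    push q w⁻¹ = (push (q * ψ w⁻¹) w)⁻¹ :=
  eq_inv_of_mul_eq_one_left (by rw [← hp, inv_mul_cancel, hp.map_one])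

theorem map_mul_of_mem_ker (hp : IsPushCocycle ψ push) (q : Q) {w : M} (hw : ψ w = 1)
    (w' : M) : push q (w * w') = push q w * push q w' := by
  rw [hp, hw, mul_one]

theorem map_list_prod (hp : IsPushCocycle ψ push) (q : Q) {l : List M}
    (hl : ∀ g ∈ l, ψ g = 1) : push q l.prod = (l.map (push q)).prod := by
  induction l with
  | nil => exact hp.map_one q
  | cons a l ih =>
    rw [List.prod_cons, hp.map_mul_of_mem_ker q (hl a List.mem_cons_self), List.map_cons,
      List.prod_cons, ih fun g hg => hl g (List.mem_cons_of_mem _ hg)]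

theorem map_inv_mul_mul (hp : IsPushCocycle ψ push) (q : Q) (u : M) {c : M} (hc : ψ c = 1) :
    push q (u⁻¹ * c * u) =
      (push (q * ψ u⁻¹) u)⁻¹ * push (q * ψ u⁻¹) c * push (q * ψ u⁻¹) u := by
  rw [mul_assoc, hp, hp.map_mul_of_mem_ker _ hc, hp.map_inv, mul_assoc]

def kerHom (hp : IsPushCocycle ψ push) : ψ.ker →* H :=
  MonoidHom.mk' (fun w => push 1 w) fun w w' => hp.map_mul_of_mem_ker 1 w.2 w'

theorem areaLe_push_prod_conj (hp : IsPushCocycle ψ push) {Cs U : Set M}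
    (hCs : ∀ c ∈ Cs, ψ c = 1) {R : Set H} {B : ℕ}
    (hb : ∀ c ∈ Cs, ∀ u ∈ U, AreaLe R (push (ψ u⁻¹) c) B) {k : ℕ} (u c : Fin k → M)
    (hc : ∀ i, c i ∈ Cs ∪ Cs⁻¹) (hu : ∀ i, u i ∈ U) :
    AreaLe R (push 1 (List.ofFn fun i => (u i)⁻¹ * c i * u i).prod) (k * B) := by
  have hc1 : ∀ i, ψ (c i) = 1 := fun i => by
    rcases hc i with h | h
    exacts [hCs _ h, by simpa using hCs _ h]
  have hpush_c : ∀ i, AreaLe R (push (ψ (u i)⁻¹) (c i)) B := fun i => by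
    rcases hc i with h | h
    · exact hb _ h _ (hu i)
    · have h' := (hb _ h _ (hu i)).inv
      rwa [hp.map_inv, inv_inv, _root_.map_inv ψ (c i), hc1 i, inv_one, mul_one] at h'
  have hterm : ∀ i, AreaLe R (push 1 ((u i)⁻¹ * c i * u i)) B := fun i => by
    have h := (hpush_c i).conj (push (ψ (u i)⁻¹) (u i))⁻¹
    rwa [inv_inv, ← one_mul (ψ (u i)⁻¹), ← hp.map_inv_mul_mul 1 _ (hc1 i)] at h
  have h := areaLe_list_prod (R := R) (l := List.ofFn fun i => push 1 ((u i)⁻¹ * c i * u i))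
    (by simpa [List.mem_ofFn] using hterm)
  rw [List.length_ofFn] at h
  rw [hp.map_list_prod 1 (by simp [List.mem_ofFn, hc1]), List.map_ofFn]
  exact h

end IsPushCocycle

end PushDown

theorem pushdown_presentation_and_dehn_bound_general
    {K G Q : Type} [Group K] [Group G] [Group Q]
    (ι : K →* G)
    (pr : G →* Q)
    (hexact : ι.range = pr.ker)
    (A : Type) (πG : FreeGroup A →* G)
    (Cs : Finset (FreeGroup A))
    (hpres : IsPresentation πG (Cs : Set (FreeGroup A)))
    (αG ρG : ℕ → ℕ) (hαmono : Monotone αG) (hρmono : Monotone ρG)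
    (hAR : ∀ w : FreeGroup A, πG w = 1 →
      ∃ k : ℕ, k ≤ αG (wordLength w) ∧ ∃ u c : Fin k → FreeGroup A,
        (∀ i, c i ∈ (Cs : Set (FreeGroup A)) ∪ (Cs : Set (FreeGroup A))⁻¹) ∧
        (∀ i, wordLength (u i) ≤ ρG (wordLength w)) ∧
        w = (List.ofFn fun i => (u i)⁻¹ * c i * u i).prod)
    (X : Type) [Fintype X] (toK : X → K)
    (ιlift : FreeGroup X →* FreeGroup A)
    (hlift : ∀ v : FreeGroup X, πG (ιlift v) = ι (FreeGroup.lift toK v))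
    (Rs : Finset (FreeGroup X))
    (hRs : ∀ ρ ∈ Rs, FreeGroup.lift toK ρ = 1)
    (push : Q → FreeGroup A → FreeGroup X)
    (hcocycle : ∀ (q : Q) (w w' : FreeGroup A),
      push q (w * w') = push q w * push (q * pr (πG w)) w')
    (ha : ∀ x : X, ∃ M : ℕ, AreaLe (Rs : Set (FreeGroup X))
      (push 1 (ιlift (FreeGroup.of x)) * (FreeGroup.of x)⁻¹) M)
    (f : ℕ → ℕ) (hf : Monotone f)
    (hb : ∀ c ∈ Cs, ∀ (N : ℕ) (q : Q),
      (∃ w : FreeGroup A, pr (πG w) = q ∧ wordLength w ≤ N) →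
      AreaLe (Rs : Set (FreeGroup X)) (push q c) (f N)) :
    (FreeGroup.lift toK).ker = Subgroup.normalClosure (Rs : Set (FreeGroup X)) ∧
    ∃ C' : ℕ, 0 < C' ∧ ∀ N : ℕ,
      dehn (FreeGroup.lift toK) (Rs : Set (FreeGroup X)) N ≤
        ((C' * (αG (C' * N + C') * f (ρG (C' * N + C'))) + C' * N + C' : ℕ) : ℕ∞) := by
  have hpush : IsPushCocycle (pr.comp πG) push := hcocycle
  have hCs : ∀ c ∈ (Cs : Set (FreeGroup A)), pr.comp πG c = 1 := fun c hc => by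
    have hc' : c ∈ πG.ker := hpres.2 ▸ Subgroup.subset_normalClosure hc
    rw [MonoidHom.comp_apply, MonoidHom.mem_ker.mp hc', map_one]
  have hιlift : ∀ v, ιlift v ∈ (pr.comp πG).ker := fun v => by
    rw [MonoidHom.mem_ker, MonoidHom.comp_apply, hlift, ← MonoidHom.mem_ker, ← hexact]
    exact ⟨_, rfl⟩
  set φ := hpush.kerHom.comp (ιlift.codRestrict _ hιlift)
  choose Mx hMx using ha
  obtain ⟨M₀, hM₀⟩ := (Set.finite_range Mx).bddAbove
  obtain ⟨C₀, hC₀⟩ := exists_wordLength_map_le ιlift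
  have harea : ∀ w, FreeGroup.lift toK w = 1 → AreaLe (Rs : Set (FreeGroup X)) w
      (M₀ * wordLength w + αG (C₀ * wordLength w) * f (ρG (C₀ * wordLength w))) := by
    intro w hw
    obtain ⟨k, hk, u, c, hc, hu, hprod⟩ := hAR (ιlift w) (by rw [hlift, hw, map_one])
    have hφw : AreaLe (Rs : Set (FreeGroup X)) (φ w) (k * f (ρG (wordLength (ιlift w)))) := by
      have h := hpush.areaLe_push_prod_conj (U := {u | wordLength u ≤ ρG (wordLength (ιlift w))})
        hCs (fun c hc u hu => hb c hc _ _ ⟨u⁻¹, rfl, by rwa [wordLength_inv]⟩) u c hc hu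
      rwa [← hprod] at h
    have hφw_w : AreaLe (Rs : Set (FreeGroup X)) (φ w * w⁻¹) (M₀ * wordLength w) :=
      areaLe_map_mul_inv_map φ (MonoidHom.id _) (fun x => (hMx x).mono (hM₀ ⟨x, rfl⟩)) w
    have h := hφw_w.inv.mul hφw
    rw [mul_inv_rev, inv_inv, inv_mul_cancel_right] at h
    exact h.mono (Nat.add_le_add_left
      (Nat.mul_le_mul (hk.trans (hαmono (hC₀ w))) (hf (hρmono (hC₀ w)))) _)
  have hg : Monotone fun n => αG n * f (ρG n) := fun _ _ h =>
    Nat.mul_le_mul (hαmono h) (hf (hρmono h))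
  exact ⟨le_antisymm (fun w hw => (harea w hw).mem_normalClosure)
    (Subgroup.normalClosure_le_normal fun ρ hρ => hRs ρ hρ), M₀ + C₀ + 1, by omega,
    fun N => dehn_le_of_forall_areaLe fun w hwN hw =>
      (harea w hw).mono (add_comp_le_scaled hg M₀ C₀ hwN)⟩

theorem pushdown_presentation_and_dehn_bound
    {K G Q : Type} [Group K] [Group G] [Group Q]
    (ι : K →* G) (hι : Function.Injective ι)
    (pr : G →* Q) (hpr : Function.Surjective pr)
    (hexact : ι.range = pr.ker)
    (A : Type) [Fintype A] (πG : FreeGroup A →* G)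
    (Cs : Finset (FreeGroup A))
    (hpres : IsPresentation πG (Cs : Set (FreeGroup A)))
    (αG ρG : ℕ → ℕ) (hαmono : Monotone αG) (hρmono : Monotone ρG)
    (hAR : ∀ w : FreeGroup A, πG w = 1 →
      ∃ k : ℕ, k ≤ αG (wordLength w) ∧ ∃ u c : Fin k → FreeGroup A,
        (∀ i, c i ∈ (Cs : Set (FreeGroup A)) ∪ (Cs : Set (FreeGroup A))⁻¹) ∧
        (∀ i, wordLength (u i) ≤ ρG (wordLength w)) ∧
        w = (List.ofFn fun i => (u i)⁻¹ * c i * u i).prod)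
    (X : Type) [Fintype X] (toK : X → K)
    (hgen : Subgroup.closure (Set.range toK) = ⊤)
    (ιlift : FreeGroup X →* FreeGroup A)
    (hlift : ∀ v : FreeGroup X, πG (ιlift v) = ι (FreeGroup.lift toK v))
    (Rs : Finset (FreeGroup X))
    (hRs : ∀ ρ ∈ Rs, FreeGroup.lift toK ρ = 1)
    (push : Q → FreeGroup A → FreeGroup X)
    (hcocycle : ∀ (q : Q) (w w' : FreeGroup A),
      push q (w * w') = push q w * push (q * pr (πG w)) w')
    (hpush2 : ∀ x : X, FreeGroup.lift toK (push 1 (ιlift (FreeGroup.of x))) = toK x)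
    (ha : ∀ x : X, ∃ M : ℕ, AreaLe (Rs : Set (FreeGroup X))
      (push 1 (ιlift (FreeGroup.of x)) * (FreeGroup.of x)⁻¹) M)
    (f : ℕ → ℕ) (hf : Monotone f)
    (hb : ∀ c ∈ Cs, ∀ (N : ℕ) (q : Q),
      (∃ w : FreeGroup A, pr (πG w) = q ∧ wordLength w ≤ N) →
      AreaLe (Rs : Set (FreeGroup X)) (push q c) (f N)) :
    (FreeGroup.lift toK).ker = Subgroup.normalClosure (Rs : Set (FreeGroup X)) ∧
    ∃ C' : ℕ, 0 < C' ∧ ∀ N : ℕ,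
      dehn (FreeGroup.lift toK) (Rs : Set (FreeGroup X)) N ≤
        ((C' * (αG (C' * N + C') * f (ρG (C' * N + C'))) + C' * N + C' : ℕ) : ℕ∞) :=
  pushdown_presentation_and_dehn_bound_general ι pr hexact A πG Cs hpres αG ρG hαmono hρmono hAR X
    toK ιlift hlift Rs hRs push hcocycle ha f hf hb

end DehnPaper
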